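/- arXiv:1204.5152 — 4 statements merged into one kernel-verified Lean document; each statement's English description precedes it below -/
import Mathlib

section
/- For a path-connected topological space X, the evaluation fibration p : X^I → X × X sending a path α to (α(0), α(1)) admits a global continuous section if and only if X is contractible. -/
open Set unitInterval

universe u v

/-- A motion planner on a subset `U ⊆ X × X`: a continuous choice of paths
joining the two coordinates of each point of `U`. -/
def IsMotionPlanner {X : Type u} [TopologicalSpace X] (U : Set (X × X))
    (s : C(U, C(unitInterval, X))) : Prop :=
  ∀ z : U, ((s z) 0, (s z) 1) = (z : X × X)

/-- `X × X` admits an open cover by `n` sets, each admitting a continuous section of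
the path fibration `p : X^I → X × X`, `p(α) = (α 0, α 1)`. -/
def TCCover (X : Type u) [TopologicalSpace X] (n : ℕ) : Prop :=
  ∃ U : Fin n → Set (X × X),
    (∀ i, IsOpen (U i)) ∧ (∀ z : X × X, ∃ i, z ∈ U i) ∧
      ∀ i, ∃ s : C(U i, C(unitInterval, X)), IsMotionPlanner (U i) s

/-- (Non-normalized) topological complexity of Farber. -/
noncomputable def topologicalComplexity (X : Type u) [TopologicalSpace X] : ℕ :=
  sInf {n | TCCover X n}

/-- Monoidal version: each set contains the diagonal and the sections are constant paths
on the diagonal. -/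
def TCMCover (X : Type u) [TopologicalSpace X] (n : ℕ) : Prop :=
  ∃ U : Fin n → Set (X × X),
    (∀ i, IsOpen (U i)) ∧ (∀ i (x : X), (x, x) ∈ U i) ∧ (∀ z : X × X, ∃ i, z ∈ U i) ∧
      ∀ i, ∃ s : C(U i, C(unitInterval, X)), IsMotionPlanner (U i) s ∧
        ∀ (x : X) (h : (x, x) ∈ U i), s ⟨(x, x), h⟩ = ContinuousMap.const unitInterval x

/-- Monoidal topological complexity of Iwase–Sakai (non-normalized). -/
noncomputable def monoidalTC (X : Type u) [TopologicalSpace X] : ℕ :=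
  sInf {n | TCMCover X n}

/-- `X` admits an open cover by `n` sets, each contractible in `X`. -/
def catCover (X : Type u) [TopologicalSpace X] (n : ℕ) : Prop :=
  ∃ U : Fin n → Set X,
    (∀ i, IsOpen (U i)) ∧ (∀ x : X, ∃ i, x ∈ U i) ∧
      ∀ i, ∃ x₀ : X, ContinuousMap.Homotopic
        (⟨Subtype.val, continuous_subtype_val⟩ : C(U i, X)) (ContinuousMap.const (U i) x₀)

/-- Non-normalized Lusternik–Schnirelmann category (`LScat pt = 1`). -/
noncomputable def LScat (X : Type u) [TopologicalSpace X] : ℕ :=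
  sInf {n | catCover X n}

/-- `X` is `q`-connected: path-connected with trivial homotopy groups `π_k` for `1 ≤ k ≤ q`. -/
def IsQConnected (X : Type u) [TopologicalSpace X] (q : ℕ) : Prop :=
  PathConnectedSpace X ∧
    ∀ k : ℕ, 1 ≤ k → k ≤ q → ∀ x : X, Subsingleton (HomotopyGroup (Fin k) X x)

/-- `X` carries a CW-structure all of whose cells have dimension at most `m`:
there are characteristic maps from closed euclidean balls whose open-cell images cover `X`
injectively, cell boundaries attach to cells of lower dimension, no cells above dimension `m`,
and `X` has the weak topology determined by the cells. -/
def IsCWComplexOfDimLE (X : Type u) [TopologicalSpace X] (m : ℕ) : Prop :=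
  ∃ (cells : ℕ → Type) (Φ : ∀ n, cells n →
      C((Metric.closedBall (0 : EuclideanSpace ℝ (Fin n)) 1 :
          Set (EuclideanSpace ℝ (Fin n))), X)),
    (∀ n, m < n → IsEmpty (cells n)) ∧
    (∀ x : X, ∃ n, ∃ i : cells n,
        ∃ b : (Metric.closedBall (0 : EuclideanSpace ℝ (Fin n)) 1 :
            Set (EuclideanSpace ℝ (Fin n))),
          ‖(b : EuclideanSpace ℝ (Fin n))‖ < 1 ∧ Φ n i b = x) ∧
    (∀ n (i : cells n), Set.InjOn (Φ n i) {b | ‖(b : EuclideanSpace ℝ (Fin n))‖ < 1}) ∧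
    (∀ n (i : cells n)
        (b : (Metric.closedBall (0 : EuclideanSpace ℝ (Fin n)) 1 :
            Set (EuclideanSpace ℝ (Fin n)))),
        ‖(b : EuclideanSpace ℝ (Fin n))‖ = 1 →
        ∃ k, k < n ∧ ∃ j : cells k,
          ∃ b' : (Metric.closedBall (0 : EuclideanSpace ℝ (Fin k)) 1 :
              Set (EuclideanSpace ℝ (Fin k))),
            Φ k j b' = Φ n i b) ∧
    (∀ A : Set X, (∀ n (i : cells n), IsClosed ((Φ n i) ⁻¹' A)) → IsClosed A)

/-!
A section `s` contracts `X` onto any point `x₀` along the paths `s (x, x₀)`. Conversely, a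
null-homotopy of the identity moves each point `x` along a track to the base point `x₀`,
continuously in `x`; following the track of `x` and then the reversed track of `y` is a path
from `x` to `y` depending continuously on `(x, y)`.
-/

section EvalFibration

variable {X : Type u} [TopologicalSpace X]

theorem contractibleSpace_of_pathSection [Nonempty X] (s : C(X × X, C(I, X)))
    (hs : ∀ z : X × X, (s z 0, s z 1) = z) : ContractibleSpace X := by
  obtain ⟨x₀⟩ := ‹Nonempty X›
  rw [contractible_iff_id_nullhomotopic]
  exact ⟨x₀, ⟨{ toFun := fun p => s (p.2, x₀) p.1
                continuous_toFun := by fun_prop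
                map_zero_left := fun x => congrArg Prod.fst (hs (x, x₀))
                map_one_left := fun x => congrArg Prod.snd (hs (x, x₀)) }⟩⟩

theorem ContinuousMap.Homotopy.continuous_uncurry_evalAt {Y : Type v} [TopologicalSpace Y]
    {f g : C(X, Y)} (H : f.Homotopy g) : Continuous ↿H.evalAt :=
  H.continuous.comp continuous_swap

theorem exists_pathSection_of_continuous_paths {x₀ : X} (γ : ∀ x, Path x x₀)
    (hγ : Continuous ↿γ) : ∃ s : C(X × X, C(I, X)), ∀ z : X × X, (s z 0, s z 1) = z := by
  let P : ∀ z : X × X, Path z.1 z.2 := fun z => (γ z.1).trans (γ z.2).symm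
  have hP : Continuous ↿P :=
    Path.trans_continuous_family (fun z : X × X => γ z.1)
      (hγ.comp (continuous_fst.fst.prodMk continuous_snd)) (fun z : X × X => (γ z.2).symm)
      (Path.symm_continuous_family (fun z : X × X => γ z.2)
        (hγ.comp (continuous_fst.snd.prodMk continuous_snd)))
  exact ⟨⟨fun z => P z, ContinuousMap.continuous_of_continuous_uncurry _ hP⟩,
    fun z => Prod.ext (P z).source (P z).target⟩

end EvalFibration

/-- For a path-connected space `X`, the evaluation fibration
`p : X^I → X × X`, `p(α) = (α 0, α 1)`, admits a global continuous section
if and only if `X` is contractible. -/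
theorem evalFibration_hasGlobalSection_iff_contractible
    (X : Type u) [TopologicalSpace X] [PathConnectedSpace X] :
    (∃ s : C(X × X, C(unitInterval, X)),
        ∀ z : X × X, (((s z) 0 : X), ((s z) 1 : X)) = z) ↔ ContractibleSpace X := by
  refine ⟨fun ⟨s, hs⟩ => contractibleSpace_of_pathSection s hs, fun h => ?_⟩
  obtain ⟨x₀, ⟨H⟩⟩ := (contractible_iff_id_nullhomotopic X).mp h
  exact exists_pathSection_of_continuous_paths H.evalAt H.continuous_uncurry_evalAt
end

section
/- If α is a cohomology class of even degree p in H^p(X;R) with α^{n+1} = 0 and X has trivial cohomology with R coefficients above degree np, then in H^*(X × X; R) one has (α × 1 − 1 × α)^{2n} = (−1)^n · C(2n,n) · (α^n × α^n), where C(2n,n) is the central binomial coefficient and × denotes the cohomology cross product. -/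
/-- Abstract model of the cohomology computation.  Here `HX` plays the role of
`H^*(X;R)`, `H` that of `H^*(X×X;R)`, the ring homomorphisms `φ = pr₁^*` and `ψ = pr₂^*`
send `α` to the cross products `α × 1` and `1 × α`.  Since the degree `p` of `α` is even,
`α × 1` and `1 × α` commute (Koszul rule), and since `X` has trivial cohomology above
degree `n·p` we have `α^(n+1) = 0`.  Conclusion:
`(α×1 − 1×α)^(2n) = (−1)^n · C(2n,n) · (α^n × α^n)`. -/
theorem cross_diff_pow_even_degree {HX H : Type*} [Ring HX] [Ring H]
    (p n : ℕ) (hp : Even p) (α : HX) (φ ψ : HX →+* H)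
    (hcomm : Commute (φ α) (ψ α))
    (hdim : α ^ (n + 1) = 0) :
    (φ α - ψ α) ^ (2 * n) =
      ((-1 : ℤ) ^ n * (Nat.choose (2 * n) n : ℤ)) • (φ (α ^ n) * ψ (α ^ n)) := by
  have hα : ∀ m : ℕ, n < m → α ^ m = 0 := by
    intro m hm
    calc α ^ m = α ^ (n + 1) * α ^ (m - (n + 1)) := by
          rw [← pow_add]; congr 1; omega
      _ = 0 := by rw [hdim, zero_mul]
  have keyφ : ∀ m : ℕ, n < m → (φ α) ^ m = 0 := fun m hm => by
    rw [← map_pow, hα m hm, map_zero]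
  have keyψ : ∀ m : ℕ, n < m → (-ψ α) ^ m = 0 := fun m hm => by
    rw [neg_pow, ← map_pow, hα m hm, map_zero, mul_zero]
  have hc : Commute (φ α) (-ψ α) := hcomm.neg_right
  rw [sub_eq_add_neg, hc.add_pow, Finset.sum_eq_single n]
  · have h2 : 2 * n - n = n := by omega
    rw [h2, neg_pow, ← map_pow, ← map_pow, zsmul_eq_mul]
    push_cast
    have e1 : Commute ((-1 : H) ^ n) (φ (α ^ n)) := (Commute.neg_one_left _).pow_left n
    have e2 := (Nat.cast_commute ((2 * n).choose n) (φ (α ^ n) * ψ (α ^ n))).eq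
    simp only [← mul_assoc] at e2 ⊢
    rw [← e1.eq]
    conv_rhs => rw [mul_assoc, mul_assoc, ← mul_assoc (((2 * n).choose n : H)), e2]
    simp only [← mul_assoc]
  · intro m hm hne
    rcases lt_or_gt_of_ne hne with h | h
    · rw [keyψ _ (by omega), mul_zero, zero_mul]
    · rw [keyφ _ h, zero_mul, zero_mul]
  · intro h
    exact absurd (Finset.mem_range.mpr (by omega)) h
end

section
/- If α is a cohomology class of odd degree p with α^{n+1} = 0, n odd, n ≥ 1, then (α × 1 − 1 × α)^{2n−1} = C(n−1, (n−1)/2) · (α^n × α^{n−1} − α^{n−1} × α^n) in H^*(X × X; R). -/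
/-- abstract model, `φ α = α × 1`, `ψ α = 1 × α` in `H = H^*(X×X;R)`,
so that `α^j × α^k = φ (α^j) * ψ (α^k)`.  `α` has odd degree `p` (Koszul
anticommutation), `α^(n+1) = 0`, `n` odd, `n ≥ 1`.  Then
`(α×1 − 1×α)^(2n−1) = C(n−1,(n−1)/2) · (α^n × α^(n−1) − α^(n−1) × α^n)`. -/
theorem cross_diff_pow_odd_degree_odd_n_odd_power {HX H : Type*} [Ring HX] [Ring H]
    (p n : ℕ) (hp : Odd p) (hn : Odd n) (hn1 : 1 ≤ n) (α : HX) (φ ψ : HX →+* H)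
    (hanti : φ α * ψ α = -(ψ α * φ α))
    (hdim : α ^ (n + 1) = 0) :
    (φ α - ψ α) ^ (2 * n - 1) =
      (Nat.choose (n - 1) ((n - 1) / 2) : ℤ) •
        (φ (α ^ n) * ψ (α ^ (n - 1)) - φ (α ^ (n - 1)) * ψ (α ^ n)) := by
  obtain ⟨m, hm⟩ := hn
  subst hm
  set a := φ α with ha
  set b := ψ α with hb
  have hA : a ^ (2*m+1+1) = 0 := by rw [ha, ← map_pow, hdim, map_zero]
  have hB : b ^ (2*m+1+1) = 0 := by rw [hb, ← map_pow, hdim, map_zero]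
  have hAz : ∀ t, 2*m+2 ≤ t → a^t = 0 := fun t ht => by
    rw [show t = (2*m+1+1) + (t - (2*m+2)) from by omega, pow_add, hA, zero_mul]
  have hBz : ∀ t, 2*m+2 ≤ t → b^t = 0 := fun t ht => by
    rw [show t = (2*m+1+1) + (t - (2*m+2)) from by omega, pow_add, hB, zero_mul]
  have hba : b * a = -(a * b) := by rw [hanti, neg_neg]
  have hcab : Commute (a^2) b := by
    show a^2 * b = b * a^2
    calc a^2*b = a*(a*b) := by rw [sq, mul_assoc]
    _ = -(a*(b*a)) := by rw [hanti, mul_neg]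
    _ = -((a*b)*a) := by rw [mul_assoc]
    _ = b*a*a := by rw [hanti, neg_mul, neg_neg]
    _ = b*a^2 := by rw [sq, mul_assoc]
  have hbam : b * a^(2*m) = a^(2*m) * b := by
    have := (hcab.pow_left m).symm.eq
    rwa [← pow_mul] at this
  have hsq : (a - b)^2 = a^2 + b^2 := by
    have h : (a-b)^2 = a^2 - a*b - b*a + b^2 := by noncomm_ring
    rw [h, hba]; abel
  have hsum : (a^2 + b^2)^(2*m) = a^(2*m) * b^(2*m) * (Nat.choose (2*m) m : H) := by
    rw [(hcab.pow_right 2).add_pow]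
    rw [Finset.sum_eq_single m]
    · rw [← pow_mul, ← pow_mul, show 2*(2*m-m) = 2*m from by omega]
    · intro k hk hkm
      rw [Finset.mem_range] at hk
      rw [← pow_mul, ← pow_mul]
      rcases lt_or_gt_of_ne hkm with h | h
      · rw [hBz (2*(2*m-k)) (by omega), mul_zero, zero_mul]
      · rw [hAz (2*k) (by omega), zero_mul, zero_mul]
    · intro h
      exact absurd (Finset.mem_range.2 (by omega)) h
  have key : (a - b) ^ (2*(2*m+1) - 1) = (a-b) * (a^(2*m) * b^(2*m) * (Nat.choose (2*m) m : H)) := by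
    rw [show 2*(2*m+1)-1 = 2*(2*m)+1 from by omega, pow_succ', pow_mul, hsq, hsum]
  rw [key]
  have hch : 2*m/2 = m := by omega
  rw [show 2*m+1-1 = 2*m from rfl, hch, map_pow, map_pow, map_pow, map_pow]
  rw [natCast_zsmul]
  have hmain : (a-b) * (a^(2*m) * b^(2*m)) = a^(2*m+1)*b^(2*m) - a^(2*m)*b^(2*m+1) := by
    rw [sub_mul, ← mul_assoc, ← mul_assoc, hbam, ← pow_succ', mul_assoc, ← pow_succ']
  calc (a-b) * (a^(2*m) * b^(2*m) * (Nat.choose (2*m) m : H))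
      = ((a-b) * (a^(2*m) * b^(2*m))) * (Nat.choose (2*m) m : H) := by noncomm_ring
    _ = (Nat.choose (2*m) m : H) * ((a-b) * (a^(2*m) * b^(2*m))) :=
        ((Nat.cast_commute _ _).eq).symm
    _ = (Nat.choose (2*m) m) • (a^(2*m+1)*b^(2*m) - a^(2*m)*b^(2*m+1)) := by
        rw [hmain, nsmul_eq_mul]
end

section
/- The topological complexity of a space X satisfies TC(X) ≤ 2·cat(X) − 1, where cat denotes the (non-normalized) Lusternik–Schnirelmann category. -/
/-!
Take a bump covering `f` subordinate to a categorical cover `U₁, …, Uₙ`; at every point some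
`fᵢ` equals `1`. For a level `t ∈ [0, 1)`, the points where no `fᵢ` takes the value `t` split
into disjoint open pieces according to the set `{i | t < fᵢ x}`, each inside some `Uᵢ`. A product
of two pieces carries a motion planner (contract, cross by a fixed path, uncontract), and these
glue over the disjoint union. Each point is regular at all but `n - 1` of `2n - 1` fixed levels,
so any two points share a regular level, and the `2n - 1` squares of regular sets cover `X × X`.
-/

open Set unitInterval

universe u v

open Function Topology

section

variable {X : Type u} [TopologicalSpace X]

def IsContractibleIn (A : Set X) : Prop :=
  ∃ x₀ : X, ContinuousMap.Homotopic
    (⟨Subtype.val, continuous_subtype_val⟩ : C(A, X)) (ContinuousMap.const A x₀)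

theorem IsContractibleIn.mono {A B : Set X} (hAB : A ⊆ B) (hB : IsContractibleIn B) :
    IsContractibleIn A :=
  let ⟨x₀, hx₀⟩ := hB
  ⟨x₀, hx₀.comp (ContinuousMap.Homotopic.refl ⟨inclusion hAB, continuous_inclusion hAB⟩)⟩

theorem exists_motionPlanner_of_continuous_paths {U : Set (X × X)}
    (γ : ∀ z : U, Path (z : X × X).1 (z : X × X).2) (hγ : Continuous ↿γ) :
    ∃ s, IsMotionPlanner U s :=
  ⟨ContinuousMap.curry ⟨↿γ, hγ⟩, fun z => Prod.ext (γ z).source (γ z).target⟩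

theorem exists_motionPlanner_prod [PathConnectedSpace X] {A B : Set X}
    (hA : IsContractibleIn A) (hB : IsContractibleIn B) : ∃ s, IsMotionPlanner (A ×ˢ B) s := by
  obtain ⟨a, ⟨F⟩⟩ := hA
  obtain ⟨b, ⟨G⟩⟩ := hB
  let π₁ : C(↥(A ×ˢ B), A) := ⟨fun z => ⟨z.1.1, z.2.1⟩, by fun_prop⟩
  let π₂ : C(↥(A ×ˢ B), B) := ⟨fun z => ⟨z.1.2, z.2.2⟩, by fun_prop⟩
  have hF : Continuous ↿fun z => F.evalAt (π₁ z) := F.continuous.comp (by fun_prop)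
  have hG : Continuous ↿fun z => G.evalAt (π₂ z) := G.continuous.comp (by fun_prop)
  exact exists_motionPlanner_of_continuous_paths _
    (Path.trans_continuous_family _
      (Path.trans_continuous_family _ hF (fun _ => PathConnectedSpace.somePath a b)
        (PathConnectedSpace.somePath a b).continuous.snd')
      _ (Path.symm_continuous_family _ hG))

theorem exists_motionPlanner_iUnion {ι : Type*} {O : ι → Set (X × X)} (hO : ∀ i, IsOpen (O i))
    (hd : Pairwise (Disjoint on O)) (hs : ∀ i, ∃ s, IsMotionPlanner (O i) s) :
    ∃ s, IsMotionPlanner (⋃ i, O i) s := by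
  choose s hs using hs
  let S : ι → Set ↥(⋃ i, O i) := fun i => Subtype.val ⁻¹' O i
  have hS : ∀ z : ↥(⋃ i, O i), ∃ i, S i ∈ 𝓝 z := fun z =>
    (mem_iUnion.1 z.2).imp fun i hi => ((hO i).preimage continuous_subtype_val).mem_nhds hi
  let φ : ∀ i, C(S i, C(I, X)) := fun i => (s i).comp ⟨fun z => ⟨z.1.1, z.2⟩, by fun_prop⟩
  have hφ : ∀ i j z (hi : z ∈ S i) (hj : z ∈ S j), φ i ⟨z, hi⟩ = φ j ⟨z, hj⟩ := by
    intro i j z hi hj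
    obtain rfl := hd.eq (not_disjoint_iff.2 ⟨z.1, hi, hj⟩)
    rfl
  refine ⟨ContinuousMap.liftCover S φ hφ hS, fun z => ?_⟩
  obtain ⟨i, hi⟩ := mem_iUnion.1 z.2
  rw [ContinuousMap.liftCover_coe (⟨z, hi⟩ : S i)]
  exact hs i ⟨z, hi⟩

theorem IsMotionPlanner.isContractibleIn_slice {U : Set (X × X)} {s : C(U, C(I, X))}
    (hs : IsMotionPlanner U s) (x₀ : X) : IsContractibleIn {x | (x₀, x) ∈ U} := by
  let j : C({x | (x₀, x) ∈ U}, U) := ⟨fun x => ⟨(x₀, x), x.2⟩, by fun_prop⟩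
  refine ⟨x₀, ⟨⟨⟨fun p => s (j p.2) (σ p.1), by fun_prop⟩, fun x => ?_, fun x => ?_⟩⟩⟩
  · simpa [j] using congrArg Prod.snd (hs (j x))
  · simpa [j] using congrArg Prod.fst (hs (j x))

namespace BumpCovering

variable {ι : Type*} {s : Set X} (f : BumpCovering ι X s) (t : ℝ)

def regularSet : Set X := {x | ∀ i, f i x ≠ t}

/-- On `f.regularSet t`, the pieces `f.levelPiece t S` are the fibres of `x ↦ {i | t < f i x}`. -/
def levelPiece (S : Set ι) : Set X := {x | ∀ i, (i ∈ S → t < f i x) ∧ (i ∉ S → f i x < t)}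

variable {f t}

theorem isOpen_regularSet [Finite ι] : IsOpen (f.regularSet t) := by
  rw [regularSet, ofPred_forall]
  exact isOpen_iInter_of_finite fun i => isOpen_ne_fun (f i).continuous continuous_const

theorem isOpen_levelPiece [Finite ι] (S : Set ι) : IsOpen (f.levelPiece t S) := by
  rw [levelPiece, ofPred_forall]
  refine isOpen_iInter_of_finite fun i => ?_
  by_cases hi : i ∈ S
  · simpa [hi] using isOpen_lt continuous_const (f i).continuous
  · simpa [hi] using isOpen_lt (f i).continuous continuous_const

theorem mem_iff_lt_of_mem_levelPiece {S : Set ι} {x : X} (hx : x ∈ f.levelPiece t S) (i : ι) :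
    i ∈ S ↔ t < f i x :=
  ⟨(hx i).1, fun h => by_contra fun hi => (h.trans ((hx i).2 hi)).false⟩

theorem pairwise_disjoint_levelPiece : Pairwise (Disjoint on f.levelPiece t) := by
  refine fun S T hST => Set.disjoint_left.2 fun _ hS hT => hST ?_
  ext i
  rw [mem_iff_lt_of_mem_levelPiece hS, mem_iff_lt_of_mem_levelPiece hT]

theorem levelPiece_subset {U : ι → Set X} (hf : f.IsSubordinate U) (ht : 0 ≤ t) {S : Set ι}
    {i : ι} (hi : i ∈ S) : f.levelPiece t S ⊆ U i := fun _ hx =>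
  hf i (subset_tsupport _ (ht.trans_lt ((hx i).1 hi)).ne')

theorem regularSet_eq_iUnion_levelPiece (f : BumpCovering ι X univ) (ht : t < 1) :
    f.regularSet t = ⋃ S : {S : Set ι // S.Nonempty}, f.levelPiece t S := by
  ext x
  simp only [mem_iUnion]
  constructor
  · intro hx
    refine ⟨⟨{i | t < f i x}, f.ind x (mem_univ x), ?_⟩, fun i => ⟨id, fun hi => ?_⟩⟩
    · simpa [f.ind_apply x (mem_univ x)] using ht
    · exact lt_of_le_of_ne (not_lt.1 hi) (hx i)
  · rintro ⟨S, hS⟩ i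
    by_cases hi : i ∈ (S : Set ι)
    · exact ((hS i).1 hi).ne'
    · exact ((hS i).2 hi).ne

open Classical Finset in
/-- A level `t k` at which `x` is not regular is the value at `x` of a bump other than
`f.ind x hx` (which is `1` there), and distinct levels need distinct bumps. -/
theorem card_filter_notMem_regularSet_le [Fintype ι] {κ : Type*} [Fintype κ]
    (t : κ ↪ Ico (0 : ℝ) 1) {x : X} (hx : x ∈ s) :
    #{k | x ∉ f.regularSet (t k)} ≤ Fintype.card ι - 1 := by
  set i₀ := f.ind x hx
  have hmaps : ∀ k ∈ ({k | x ∉ f.regularSet (t k)} : Finset κ),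
      (t k : ℝ) ∈ (univ.erase i₀).image (f · x) := by
    intro k hk
    obtain ⟨i, hi⟩ : ∃ i, f i x = t k := by simpa [regularSet] using hk
    refine mem_image.2 ⟨i, mem_erase.2 ⟨?_, mem_univ i⟩, hi⟩
    rintro rfl
    exact (t k).2.2.ne (hi.symm.trans (f.ind_apply x hx))
  calc #{k | x ∉ f.regularSet (t k)}
      ≤ #((univ.erase i₀).image (f · x)) :=
        card_le_card_of_injOn _ hmaps (Subtype.val_injective.comp t.injective).injOn
    _ ≤ #(univ.erase i₀) := card_image_le
    _ = Fintype.card ι - 1 := by rw [card_erase_of_mem (mem_univ i₀), card_univ]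

theorem exists_mem_regularSet_prod [Fintype ι] {κ : Type*} [Fintype κ]
    (t : κ ↪ Ico (0 : ℝ) 1) (hκ : 2 * Fintype.card ι - 1 ≤ Fintype.card κ) {x y : X}
    (hx : x ∈ s) (hy : y ∈ s) : ∃ k, (x, y) ∈ f.regularSet (t k) ×ˢ f.regularSet (t k) := by
  classical
  let bad (z : X) : Finset κ := {k | z ∉ f.regularSet (t k)}
  have hι : 0 < Fintype.card ι := Fintype.card_pos_iff.2 ⟨f.ind x hx⟩
  have hlt : (bad x ∪ bad y).card < (Finset.univ : Finset κ).card := by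
    have hbx : (bad x).card ≤ Fintype.card ι - 1 := f.card_filter_notMem_regularSet_le t hx
    have hby : (bad y).card ≤ Fintype.card ι - 1 := f.card_filter_notMem_regularSet_le t hy
    have := Finset.card_union_le (bad x) (bad y)
    rw [Finset.card_univ]
    omega
  obtain ⟨k, -, hk⟩ := Finset.exists_mem_notMem_of_card_lt_card hlt
  simp only [bad, Finset.mem_union, Finset.mem_filter, Finset.mem_univ, true_and, not_or,
    not_not] at hk
  exact ⟨k, hk⟩

theorem exists_motionPlanner_regularSet_prod [PathConnectedSpace X] [Finite ι]
    (f : BumpCovering ι X univ) {U : ι → Set X} (hf : f.IsSubordinate U)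
    (hU : ∀ i, IsContractibleIn (U i)) (ht : t ∈ Ico 0 1) :
    ∃ s, IsMotionPlanner (f.regularSet t ×ˢ f.regularSet t) s := by
  have hP (S : {S : Set ι // S.Nonempty}) : IsContractibleIn (f.levelPiece t S) :=
    (hU _).mono (levelPiece_subset hf ht.1 S.2.some_mem)
  have hd : Pairwise (Disjoint on fun S : {S : Set ι // S.Nonempty} => f.levelPiece t S) :=
    fun S T hST => pairwise_disjoint_levelPiece (Subtype.coe_injective.ne hST)
  rw [f.regularSet_eq_iUnion_levelPiece ht.2, ← iUnion_prod]
  refine exists_motionPlanner_iUnion (fun p => (isOpen_levelPiece _).prod (isOpen_levelPiece _))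
    (fun p q hpq => ?_) fun p => exists_motionPlanner_prod (hP p.1) (hP p.2)
  rw [onFun, disjoint_prod]
  by_cases h : p.1 = q.1
  · exact Or.inr (hd fun h' => hpq (Prod.ext h h'))
  · exact Or.inl (hd h)

end BumpCovering

theorem catCover_of_tcCover [Nonempty X] {n : ℕ} (h : TCCover X n) : catCover X n := by
  obtain ⟨U, hUo, hUc, hUs⟩ := h
  let x₀ : X := Classical.arbitrary X
  refine ⟨fun i => {x | (x₀, x) ∈ U i}, fun i => (hUo i).preimage (by fun_prop),
    fun x => hUc (x₀, x), fun i => ?_⟩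
  obtain ⟨s, hs⟩ := hUs i
  exact hs.isContractibleIn_slice x₀

theorem tcCover_two_mul_sub_one_of_catCover [PathConnectedSpace X] [NormalSpace X] {n : ℕ} (h : catCover X n) :
    TCCover X (2 * n - 1) := by
  obtain ⟨U, hUo, hUc, hU⟩ := h
  obtain ⟨f, hf⟩ := BumpCovering.exists_isSubordinate_of_locallyFinite isClosed_univ U hUo
    (locallyFinite_of_finite U) fun x _ => mem_iUnion.2 (hUc x)
  let t : Fin (2 * n - 1) ↪ Ico (0 : ℝ) 1 :=
    Fin.valEmbedding.trans ((Ico_infinite zero_lt_one).natEmbedding _)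
  refine ⟨fun k => f.regularSet (t k) ×ˢ f.regularSet (t k),
    fun k => f.isOpen_regularSet.prod f.isOpen_regularSet,
    fun z => f.exists_mem_regularSet_prod t (by simp) (mem_univ z.1) (mem_univ z.2),
    fun k => f.exists_motionPlanner_regularSet_prod hf hU (t k).2⟩

end

/-- `TC(X) ≤ 2·cat(X) − 1` for a path-connected normal space `X`
(non-normalized conventions). -/
theorem TC_le_two_cat_sub_one (X : Type u) [TopologicalSpace X]
    [PathConnectedSpace X] [NormalSpace X] :
    topologicalComplexity X ≤ 2 * LScat X - 1 := by
  have : Nonempty X := PathConnectedSpace.nonempty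
  rcases {n | catCover X n}.eq_empty_or_nonempty with hcat | hcat
  · -- `sInf ∅ = 0`: without a finite categorical cover, `X × X` must have no finite cover either.
    have hTC : {n | TCCover X n} = ∅ :=
      eq_empty_of_forall_notMem fun n hn => hcat.subset (catCover_of_tcCover hn)
    simp [topologicalComplexity, hTC]
  · exact Nat.sInf_le (tcCover_two_mul_sub_one_of_catCover (Nat.sInf_mem hcat))
end
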